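/- For every integer k ≥ 1, the matrices A_k and B_k are isometries: A_kᵀ A_k = I and B_kᵀ B_k = I, where I is the ι × ι identity matrix. Equivalently, the columns of A_k (respectively of B_k) form an orthonormal family. -/
import Mathlib



open Matrix
/-- The matrix `A_k`, with rows indexed by `(k+1)`-tuples `(m_0,…,m_k)` and columns by `ι`:
`A_k[(m_0,…,m_k), i] = √(M(m_0,m_1)⋯M(m_{k−1},m_k))` if `m_0 = i`, and `0` otherwise. -/
noncomputable def markovA {ι : Type*} [Fintype ι] [DecidableEq ι]
    (M : Matrix ι ι ℝ) (k : ℕ) : Matrix (Fin (k + 1) → ι) ι ℝ :=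
  Matrix.of fun m i =>
    if m 0 = i then Real.sqrt (∏ j : Fin k, M (m j.castSucc) (m j.succ)) else 0

/-- The matrix `B_k`, with rows indexed by `(k+1)`-tuples `(m_0,…,m_k)` and columns by `ι`:
`B_k[(m_0,…,m_k), i] = √(M(m_0,m_1)⋯M(m_{k−1},m_k))` if `m_k = i`, and `0` otherwise. -/
noncomputable def markovB {ι : Type*} [Fintype ι] [DecidableEq ι]
    (M : Matrix ι ι ℝ) (k : ℕ) : Matrix (Fin (k + 1) → ι) ι ℝ :=
  Matrix.of fun m i =>
    if m (Fin.last k) = i then Real.sqrt (∏ j : Fin k, M (m j.castSucc) (m j.succ)) else 0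

theorem markov_key {ι : Type*} [Fintype ι] [DecidableEq ι] (M : Matrix ι ι ℝ)
    (hsymm : M = Mᵀ) (hstoch : ∀ i, ∑ j : ι, M i j = 1)
    (k : ℕ) (i : ι) :
      (∑ m : Fin (k+1) → ι, (if m 0 = i then ∏ j : Fin k, M (m j.castSucc) (m j.succ) else 0) = 1)
      ∧ (∑ m : Fin (k+1) → ι, (if m (Fin.last k) = i then ∏ j : Fin k, M (m j.castSucc) (m j.succ) else 0) = 1) := by
  induction k generalizing i with
  | zero =>
    constructor <;>
    · rw [← Equiv.sum_comp (Equiv.funUnique (Fin 1) ι).symm]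
      simp [Fin.last]
  | succ k ih =>
    constructor
    · rw [← Equiv.sum_comp (Fin.snocEquiv (fun _ => ι)), Fintype.sum_prod_type_right]
      have key : ∀ (m : Fin (k+1) → ι) (x : ι),
          (fun (f : Fin (k+2) → ι) => if f 0 = i then ∏ j : Fin (k+1), M (f j.castSucc) (f j.succ) else 0)
            ((Fin.snocEquiv (fun _ => ι)) (x, m))
          = (if m 0 = i then ∏ j : Fin k, M (m j.castSucc) (m j.succ) else 0) * M (m (Fin.last k)) x := by
        intro m x
        set f : Fin (k+2) → ι := (Fin.snocEquiv (fun _ => ι)) (x, m) with hf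
        have hf' : f = Fin.snoc m x := rfl
        simp only
        have h0 : f 0 = m 0 := by
          have : (0 : Fin (k+2)) = (0 : Fin (k+1)).castSucc := rfl
          rw [hf', this, Fin.snoc_castSucc]
        rw [h0, Fin.prod_univ_castSucc]
        have hlast : M (f (Fin.last k).castSucc) (f (Fin.last k).succ) = M (m (Fin.last k)) x := by
          rw [hf', Fin.snoc_castSucc, Fin.succ_last, Fin.snoc_last]
        have hmid : ∀ j : Fin k, M (f j.castSucc.castSucc) (f j.castSucc.succ)
            = M (m j.castSucc) (m j.succ) := by
          intro j
          rw [hf', Fin.snoc_castSucc, Fin.succ_castSucc, Fin.snoc_castSucc]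
        rw [Finset.prod_congr rfl (fun j _ => hmid j), hlast]
        split <;> ring
      rw [Finset.sum_congr rfl fun m _ => Finset.sum_congr rfl fun x _ => key m x]
      have : ∀ m : Fin (k+1) → ι,
          ∑ x : ι, (if m 0 = i then ∏ j : Fin k, M (m j.castSucc) (m j.succ) else 0) * M (m (Fin.last k)) x
          = (if m 0 = i then ∏ j : Fin k, M (m j.castSucc) (m j.succ) else 0) := by
        intro m
        rw [← Finset.mul_sum, hstoch, mul_one]
      rw [Finset.sum_congr rfl fun m _ => this m]
      exact (ih i).1
    · rw [← Equiv.sum_comp (Fin.consEquiv (fun _ => ι)), Fintype.sum_prod_type_right]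
      have key : ∀ (m : Fin (k+1) → ι) (x : ι),
          (fun (f : Fin (k+2) → ι) => if f (Fin.last (k+1)) = i then ∏ j : Fin (k+1), M (f j.castSucc) (f j.succ) else 0)
            ((Fin.consEquiv (fun _ => ι)) (x, m))
          = (if m (Fin.last k) = i then ∏ j : Fin k, M (m j.castSucc) (m j.succ) else 0) * M (m 0) x := by
        intro m x
        set f : Fin (k+2) → ι := (Fin.consEquiv (fun _ => ι)) (x, m) with hf
        have hf' : f = Fin.cons x m := rfl
        simp only
        have h0 : f (Fin.last (k+1)) = m (Fin.last k) := by
          rw [hf', ← Fin.succ_last, Fin.cons_succ]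
        rw [h0, Fin.prod_univ_succ]
        have hfirst : M (f (0 : Fin (k+1)).castSucc) (f (0 : Fin (k+1)).succ) = M x (m 0) := by
          rw [hf', Fin.castSucc_zero, Fin.cons_zero, Fin.cons_succ]
        have hmid : ∀ j : Fin k, M (f j.succ.castSucc) (f j.succ.succ)
            = M (m j.castSucc) (m j.succ) := by
          intro j
          rw [hf', ← Fin.succ_castSucc, Fin.cons_succ, Fin.cons_succ]
        rw [Finset.prod_congr rfl (fun j _ => hmid j), hfirst]
        have : M x (m 0) = M (m 0) x := by
          conv_lhs => rw [hsymm]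
          rfl
        rw [this]
        split <;> ring
      rw [Finset.sum_congr rfl fun m _ => Finset.sum_congr rfl fun x _ => key m x]
      have : ∀ m : Fin (k+1) → ι,
          ∑ x : ι, (if m (Fin.last k) = i then ∏ j : Fin k, M (m j.castSucc) (m j.succ) else 0) * M (m 0) x
          = (if m (Fin.last k) = i then ∏ j : Fin k, M (m j.castSucc) (m j.succ) else 0) := by
        intro m
        rw [← Finset.mul_sum, hstoch, mul_one]
      rw [Finset.sum_congr rfl fun m _ => this m]
      exact (ih i).2

/-- For every `k ≥ 1`, `A_k` and `B_k` are isometries: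
`A_kᵀ A_k = I` and `B_kᵀ B_k = I`. -/
theorem markov_isometries
    {ι : Type*} [Fintype ι] [DecidableEq ι] [Nonempty ι] (M : Matrix ι ι ℝ)
    (hsymm : M = Mᵀ) (hnonneg : ∀ i j, 0 ≤ M i j) (hstoch : ∀ i, ∑ j : ι, M i j = 1)
    (k : ℕ) (hk : 1 ≤ k) :
    (markovA M k)ᵀ * markovA M k = 1 ∧ (markovB M k)ᵀ * markovB M k = 1 := by
  have hP : ∀ (m : Fin (k+1) → ι), 0 ≤ ∏ j : Fin k, M (m j.castSucc) (m j.succ) :=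
    fun m => Finset.prod_nonneg fun j _ => hnonneg _ _
  constructor
  · ext i i'
    simp only [Matrix.mul_apply, Matrix.transpose_apply, markovA, Matrix.of_apply,
      Matrix.one_apply]
    have hterm : ∀ m : Fin (k+1) → ι,
        (if m 0 = i then Real.sqrt (∏ j : Fin k, M (m j.castSucc) (m j.succ)) else 0) *
        (if m 0 = i' then Real.sqrt (∏ j : Fin k, M (m j.castSucc) (m j.succ)) else 0)
        = if i = i' then (if m 0 = i then ∏ j : Fin k, M (m j.castSucc) (m j.succ) else 0)
          else 0 := by
      intro m
      by_cases hii : i = i'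
      · subst hii
        rw [if_pos rfl]
        split_ifs with h1
        · exact Real.mul_self_sqrt (hP m)
        · ring
      · rw [if_neg hii]
        split_ifs with h1 h2
        · exact absurd (h1.symm.trans h2) hii
        all_goals ring
    rw [Finset.sum_congr rfl fun m _ => hterm m]
    by_cases h : i = i'
    · simp only [if_pos h]
      exact (markov_key M hsymm hstoch k i).1
    · simp only [if_neg h]
      exact Finset.sum_const_zero
  · ext i i'
    simp only [Matrix.mul_apply, Matrix.transpose_apply, markovB, Matrix.of_apply,
      Matrix.one_apply]
    have hterm : ∀ m : Fin (k+1) → ι,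
        (if m (Fin.last k) = i then Real.sqrt (∏ j : Fin k, M (m j.castSucc) (m j.succ)) else 0) *
        (if m (Fin.last k) = i' then Real.sqrt (∏ j : Fin k, M (m j.castSucc) (m j.succ)) else 0)
        = if i = i' then (if m (Fin.last k) = i then ∏ j : Fin k, M (m j.castSucc) (m j.succ) else 0)
          else 0 := by
      intro m
      by_cases hii : i = i'
      · subst hii
        rw [if_pos rfl]
        split_ifs with h1
        · exact Real.mul_self_sqrt (hP m)
        · ring
      · rw [if_neg hii]
        split_ifs with h1 h2
        · exact absurd (h1.symm.trans h2) hii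
        all_goals ring
    rw [Finset.sum_congr rfl fun m _ => hterm m]
    by_cases h : i = i'
    · simp only [if_pos h]
      exact (markov_key M hsymm hstoch k i).2
    · simp only [if_neg h]
      exact Finset.sum_const_zero
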